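/- For the complete bipartite graph K_{d,n} (with d, n ≥ 1), the recession connectivity satisfies λ(K_{d,n}) = min{d, n}. -/

import Mathlib

/-! Scaffolding for bipartite graphs given by edge sets `B : Finset (L × R)`,
their recession graphs, and the recession connectivity `λ`. -/

variable {L R : Type*}

/-- The undirected simple graph on `L ⊕ R` determined by an edge set `S ⊆ L × R`. -/
def sgraph (S : Finset (L × R)) : SimpleGraph (L ⊕ R) where
  Adj v w := (∃ e ∈ S, v = Sum.inl e.1 ∧ w = Sum.inr e.2) ∨
             (∃ e ∈ S, w = Sum.inl e.1 ∧ v = Sum.inr e.2)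
  symm := by
    refine ⟨?_⟩
    rintro v w (⟨e, he, h1, h2⟩ | ⟨e, he, h1, h2⟩)
    · exact Or.inr ⟨e, he, h1, h2⟩
    · exact Or.inl ⟨e, he, h1, h2⟩
  loopless := by
    refine ⟨?_⟩
    rintro v (⟨e, _, h1, h2⟩ | ⟨e, _, h1, h2⟩) <;> subst h1 <;> simp_all

/-- A vertex is incident to the edge set `B` if it is an endpoint of one of its edges. -/
def incid (B : Finset (L × R)) (v : L ⊕ R) : Prop :=
  ∃ e ∈ B, v = Sum.inl e.1 ∨ v = Sum.inr e.2

/-- The arcs of the recession graph `R(S; B)`: every edge of `B` gives an arc from its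
`L`-endpoint to its `R`-endpoint, and every edge of `S` additionally gives the reverse arc. -/
def recArc (S B : Finset (L × R)) (v w : L ⊕ R) : Prop :=
  (∃ e ∈ B, v = Sum.inl e.1 ∧ w = Sum.inr e.2) ∨
  (∃ e ∈ S, w = Sum.inl e.1 ∧ v = Sum.inr e.2)

/-- The recession graph `R(S; B)` is strongly connected: every vertex of `B` reaches
every other vertex of `B` by a directed path. -/
def RecStrong (S B : Finset (L × R)) : Prop :=
  ∀ v w, incid B v → incid B w → Relation.ReflTransGen (recArc S B) v w

/-- The number of connected components of (the graph of) `S` containing at least one edge. -/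
noncomputable def numComp (S : Finset (L × R)) : ℕ :=
  Set.ncard {C : (sgraph S).ConnectedComponent |
    ∃ e ∈ S, C = (sgraph S).connectedComponentMk (Sum.inl e.1)}

/-- The recession connectivity `λ(B)`:  the maximum number of connected components of a
subgraph `S ⊆ B` for which the recession graph `R(S; B)` is strongly connected. -/
noncomputable def recConn (B : Finset (L × R)) : ℕ :=
  sSup {m | ∃ S ⊆ B, RecStrong S B ∧ numComp S = m}

/-- The graph of the edge set `B` is connected (on its own vertex set). -/
def ConnectedOn (B : Finset (L × R)) : Prop :=
  B.Nonempty ∧ ∀ v w, incid B v → incid B w → (sgraph B).Reachable v w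

/-
For `K_{d,n}` every vertex of `L` has an arc to every vertex of `R`, so `R(S; K_{d,n})` is
strongly connected as soon as every vertex is covered by an edge of `S`. Every component of `S`
with an edge contains a vertex of `L` and a vertex of `R`, which bounds `c(S)` by `min d n`.
Conversely, for surjections `f : L → ι`, `g : R → ι` the edges `(a, b)` with `f a = g b` cover
every vertex and form exactly `|ι|` components, one per color; take `|ι| = min d n`.
-/

open SimpleGraph Function

section Bipartite

variable {S B : Finset (L × R)} {a : L} {b : R}

@[simp]
lemma sgraph_adj_inl_inr : (sgraph S).Adj (.inl a) (.inr b) ↔ (a, b) ∈ S := by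
  simp [sgraph]

@[simp]
lemma sgraph_adj_inr_inl : (sgraph S).Adj (.inr b) (.inl a) ↔ (a, b) ∈ S := by
  simp [sgraph]

lemma recArc_inl_inr : recArc S B (.inl a) (.inr b) ↔ (a, b) ∈ B := by
  simp [recArc]

lemma recArc_inr_inl : recArc S B (.inr b) (.inl a) ↔ (a, b) ∈ S := by
  simp [recArc]

lemma connectedComponentMk_inl_eq_inr {e : L × R} (he : e ∈ S) :
    (sgraph S).connectedComponentMk (.inl e.1) = (sgraph S).connectedComponentMk (.inr e.2) :=
  ConnectedComponent.connectedComponentMk_eq_of_adj (sgraph_adj_inl_inr.mpr he)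

lemma numComp_le_card_left [Finite L] (S : Finset (L × R)) : numComp S ≤ Nat.card L := by
  calc numComp S ≤ (Set.range fun a : L ↦ (sgraph S).connectedComponentMk (.inl a)).ncard :=
        Set.ncard_le_ncard (by rintro _ ⟨e, -, rfl⟩; exact ⟨e.1, rfl⟩) (Set.finite_range _)
    _ ≤ Nat.card L := by
        rw [← Set.image_univ]
        exact (Set.ncard_image_le Set.finite_univ).trans (Set.ncard_univ L).le

lemma numComp_le_card_right [Finite R] (S : Finset (L × R)) : numComp S ≤ Nat.card R := by
  calc numComp S ≤ (Set.range fun b : R ↦ (sgraph S).connectedComponentMk (.inr b)).ncard :=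
        Set.ncard_le_ncard
          (by rintro _ ⟨e, he, rfl⟩; exact ⟨e.2, (connectedComponentMk_inl_eq_inr he).symm⟩)
          (Set.finite_range _)
    _ ≤ Nat.card R := by
        rw [← Set.image_univ]
        exact (Set.ncard_image_le Set.finite_univ).trans (Set.ncard_univ R).le

end Bipartite

section RecConn

variable {S B : Finset (L × R)}

lemma recConn_le {m : ℕ} (h : ∀ S ⊆ B, RecStrong S B → numComp S ≤ m) : recConn B ≤ m :=
  csSup_le' (by rintro _ ⟨S, hSB, hS, rfl⟩; exact h S hSB hS)

lemma numComp_le_recConn (hSB : S ⊆ B) (hS : RecStrong S B) : numComp S ≤ recConn B := by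
  have hfin : {m | ∃ S ⊆ B, RecStrong S B ∧ numComp S = m}.Finite :=
    ((B.powerset : Set (Finset (L × R))).toFinite.image numComp).subset
      (by rintro _ ⟨S, hSB, -, rfl⟩; exact ⟨S, Finset.mem_powerset.mpr hSB, rfl⟩)
  exact le_csSup hfin.bddAbove ⟨S, hSB, hS, rfl⟩

lemma recStrong_univ_of_covers [Fintype L] [Fintype R] (hL : ∀ a, ∃ b, (a, b) ∈ S)
    (hR : ∀ b, ∃ a, (a, b) ∈ S) : RecStrong S Finset.univ := by
  have toR : ∀ v b, Relation.ReflTransGen (recArc S Finset.univ) v (.inr b) := by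
    rintro (a | b₀) b
    · exact .single (recArc_inl_inr.mpr (Finset.mem_univ _))
    · obtain ⟨a₀, h₀⟩ := hR b₀
      exact .head (recArc_inr_inl.mpr h₀) (.single (recArc_inl_inr.mpr (Finset.mem_univ _)))
  rintro v (a | b) - -
  · obtain ⟨b, hab⟩ := hL a
    exact (toR v b).tail (recArc_inr_inl.mpr hab)
  · exact toR v b

end RecConn

section FiberMatching

variable {ι : Type*} [Fintype L] [Fintype R] [DecidableEq ι] {f : L → ι} {g : R → ι}

def fiberMatching (f : L → ι) (g : R → ι) : Finset (L × R) :=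
  Finset.univ.filter fun e ↦ f e.1 = g e.2

@[simp]
lemma mem_fiberMatching {e : L × R} : e ∈ fiberMatching f g ↔ f e.1 = g e.2 := by
  simp [fiberMatching]

lemma sumElim_eq_of_reachable_fiberMatching {v w : L ⊕ R} (h : (sgraph (fiberMatching f g)).Reachable v w) :
    Sum.elim f g v = Sum.elim f g w := by
  rw [reachable_iff_reflTransGen] at h
  induction h with
  | refl => rfl
  | tail _ hadj ih =>
    refine ih.trans ?_
    rcases hadj with ⟨e, he, rfl, rfl⟩ | ⟨e, he, rfl, rfl⟩
    · exact mem_fiberMatching.mp he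
    · exact (mem_fiberMatching.mp he).symm

lemma reachable_fiberMatching_surjInv (hf : Surjective f) (hg : Surjective g) (v : L ⊕ R) :
    (sgraph (fiberMatching f g)).Reachable v (.inl (surjInv hf (Sum.elim f g v))) := by
  have toHub : ∀ b, (sgraph (fiberMatching f g)).Adj (.inr b) (.inl (surjInv hf (g b))) :=
    fun b ↦ by simp [surjInv_eq]
  rcases v with a | b
  · have hb := toHub (surjInv hg (f a))
    rw [surjInv_eq hg] at hb
    exact (sgraph_adj_inl_inr.mpr (by simp [surjInv_eq])).reachable.trans hb.reachable
  · exact (toHub b).reachable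

lemma numComp_fiberMatching (hf : Surjective f) (hg : Surjective g) :
    numComp (fiberMatching f g) = Nat.card ι := by
  set G := sgraph (fiberMatching f g)
  set φ : ι → G.ConnectedComponent := fun i ↦ G.connectedComponentMk (.inl (surjInv hf i))
  have hφ : Injective φ := fun i j hij ↦ by
    simpa [surjInv_eq] using sumElim_eq_of_reachable_fiberMatching (ConnectedComponent.exact hij)
  have hrange : {C : G.ConnectedComponent | ∃ e ∈ fiberMatching f g,
      C = G.connectedComponentMk (.inl e.1)} = Set.range φ := by
    ext C
    constructor
    · rintro ⟨e, -, rfl⟩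
      exact ⟨f e.1, (ConnectedComponent.sound (reachable_fiberMatching_surjInv hf hg (.inl e.1))).symm⟩
    · rintro ⟨i, rfl⟩
      exact ⟨(surjInv hf i, surjInv hg i), by simp [surjInv_eq], rfl⟩
  rw [numComp, hrange, Set.ncard_range_of_injective hφ]

lemma card_le_recConn_univ (hf : Surjective f) (hg : Surjective g) :
    Nat.card ι ≤ recConn (Finset.univ : Finset (L × R)) := by
  rw [← numComp_fiberMatching hf hg]
  refine numComp_le_recConn (Finset.subset_univ _) (recStrong_univ_of_covers ?_ ?_)
  · exact fun a ↦ ⟨surjInv hg (f a), by simp [surjInv_eq]⟩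
  · exact fun b ↦ ⟨surjInv hf (g b), by simp [surjInv_eq]⟩

end FiberMatching

theorem recConn_univ [Fintype L] [Fintype R] :
    recConn (Finset.univ : Finset (L × R)) = min (Fintype.card L) (Fintype.card R) := by
  set m := min (Fintype.card L) (Fintype.card R)
  refine le_antisymm (recConn_le fun S _ _ ↦ ?_) ?_
  · simpa only [Nat.card_eq_fintype_card] using
      le_min (numComp_le_card_left S) (numComp_le_card_right S)
  · rcases Nat.eq_zero_or_pos m with hm | hm
    · exact hm ▸ Nat.zero_le _
    have : Nonempty (Fin m) := ⟨⟨0, hm⟩⟩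
    obtain ⟨eL⟩ := Embedding.nonempty_of_card_le (α := Fin m) (β := L) (by simp [m])
    obtain ⟨eR⟩ := Embedding.nonempty_of_card_le (α := Fin m) (β := R) (by simp [m])
    simpa using card_le_recConn_univ (invFun_surjective eL.injective)
      (invFun_surjective eR.injective)

theorem recConn_completeBipartite_general (d n : ℕ) :
    recConn (Finset.univ : Finset (Fin d × Fin n)) = min d n := by
  simpa using recConn_univ (L := Fin d) (R := Fin n)

/-- For the complete bipartite graph `K_{d,n}` (with `d, n ≥ 1`) the
recession connectivity satisfies `λ(K_{d,n}) = min d n`. -/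
theorem recConn_completeBipartite (d n : ℕ) (hd : 1 ≤ d) (hn : 1 ≤ n) :
    recConn (Finset.univ : Finset (Fin d × Fin n)) = min d n :=
  recConn_completeBipartite_general d n
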